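/- arXiv:2502.16328 — 2 statements merged into one kernel-verified Lean document; each statement's English description precedes it below -/
import Mathlib

section
/- If μ is a stationary distribution of a finite Markov chain and for every unsafe state s ∈ A the escape probability satisfies 1 − p(s) ≥ γ for some γ > 0 (where p(s) = Σ_{s'∈A} P(s'|s)), then the stationary mass on A satisfies μ(A) ≤ α/γ, where α = Σ_{s∈B} μ(s)p(s) is the stationary inflow into A and B = S \ A. -/
theorem stationary_unsafe_mass_bound
    {S : Type*} [Fintype S] [DecidableEq S]
    (P : S → S → ℝ)
    (hP_nonneg : ∀ s s', 0 ≤ P s s')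
    (hP_sum : ∀ s, ∑ s', P s s' = 1)
    (μ : S → ℝ)
    (hμ_nonneg : ∀ s, 0 ≤ μ s)
    (hμ_sum : ∑ s, μ s = 1)
    (hμ_stat : ∀ s', μ s' = ∑ s, μ s * P s s')
    (A : Finset S)
    (p : S → ℝ)
    (hp : ∀ s, p s = ∑ s' ∈ A, P s s')
    (γ : ℝ) (hγ : 0 < γ)
    (hesc : ∀ s ∈ A, γ ≤ 1 - p s) :
    ∑ s ∈ A, μ s ≤ (∑ s ∈ Aᶜ, μ s * p s) / γ := by
  have key : ∑ s ∈ A, μ s = ∑ s, μ s * p s := by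
    calc ∑ s ∈ A, μ s = ∑ s' ∈ A, ∑ s, μ s * P s s' := by
          exact Finset.sum_congr rfl fun s' _ => hμ_stat s'
      _ = ∑ s, ∑ s' ∈ A, μ s * P s s' := Finset.sum_comm
      _ = ∑ s, μ s * p s := by
          refine Finset.sum_congr rfl fun s _ => ?_
          rw [hp, Finset.mul_sum]
  have split : ∑ s, μ s * p s = ∑ s ∈ A, μ s * p s + ∑ s ∈ Aᶜ, μ s * p s := by
    rw [Finset.sum_add_sum_compl]
  have h1 : γ * ∑ s ∈ A, μ s ≤ ∑ s ∈ Aᶜ, μ s * p s := by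
    have : ∑ s ∈ A, μ s - ∑ s ∈ A, μ s * p s = ∑ s ∈ Aᶜ, μ s * p s := by
      rw [key, split]; ring
    rw [← this, ← Finset.sum_sub_distrib]
    have : γ * ∑ s ∈ A, μ s = ∑ s ∈ A, γ * μ s := by rw [Finset.mul_sum]
    rw [this]
    refine Finset.sum_le_sum fun s hs => ?_
    have := hesc s hs
    nlinarith [hμ_nonneg s]
  rw [le_div_iff₀ hγ]
  linarith [h1]
end

section
/- For sufficiently large β, the uncertainty-penalized greedy action avoids unsafe actions: if U(s,a) ≥ η > 0 for all unsafe actions a ∈ A_u(s), U(s,a_s) < η for some safe action a_s ∉ A_u(s), and Q is bounded (|Q(s,a)| ≤ M for all a), then for all β > 2M/(η − U(s,a_s)), we have Q(s,a_s) − β·U(s,a_s) > Q(s,a) − β·U(s,a) for every a ∈ A_u(s); hence the argmax of a ↦ Q(s,a) − β·U(s,a) lies outside A_u(s). -/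
theorem penalized_greedy_avoids_unsafe
    {A : Type*} [Fintype A] [Nonempty A]
    (Q U : A → ℝ) (Au : Finset A)
    (η M : ℝ) (hη : 0 < η) (hM : 0 ≤ M)
    (hQ : ∀ a, |Q a| ≤ M)
    (hUu : ∀ a ∈ Au, η ≤ U a)
    (as : A) (has : as ∉ Au) (hUs : U as < η) :
    ∀ β : ℝ, 2 * M / (η - U as) < β →
      (∀ a ∈ Au, Q a - β * U a < Q as - β * U as) ∧
      (∀ amax : A, (∀ a, Q a - β * U a ≤ Q amax - β * U amax) → amax ∉ Au) := by
  intro β hβ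
  have hpos : 0 < η - U as := by linarith
  have h2M : 2 * M < β * (η - U as) := by
    rw [div_lt_iff₀ hpos] at hβ; linarith
  have key : ∀ a ∈ Au, Q a - β * U a < Q as - β * U as := by
    intro a ha
    have h1 := hUu a ha
    have hQa := abs_le.mp (hQ a)
    have hQs := abs_le.mp (hQ as)
    have hβU : β * (η - U as) ≤ β * (U a - U as) := by
      apply mul_le_mul_of_nonneg_left (by linarith)
      nlinarith
    nlinarith
  refine ⟨key, fun amax hmax hmem => ?_⟩
  exact absurd (hmax as) (not_le.mpr (key amax hmem))
end
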